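/- arXiv:1804.08948 — 4 statements merged into one kernel-verified Lean document; each statement's English description precedes it below -/
import Mathlib

section
/- Let M ≥ 1 and let clients j_0,…,j_{M-1} be ordered so that for each facility s the clients of ball(s,o) are consecutive. Define τ(j_p) = j_q with q = (p + ⌊M/2⌋) mod M. Then τ is a bijection, and for every facility s with |ball(s,o)| ≤ M/2, τ maps no client of ball(s,o) to another client of ball(s,o). -/
/-- `(p + k) % M` is `p + k` or `p + k - M`, at distance `k` or `M - k` from `p`. -/
theorem Nat.add_mod_notMem_Icc_of_sub_lt {M k a b p : ℕ} (hp : p < M) (hk : b - a < k)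
    (hMk : b - a < M - k) (hap : a ≤ p) (hpb : p ≤ b) :
    ¬(a ≤ (p + k) % M ∧ (p + k) % M ≤ b) := by
  rw [Nat.add_mod_eq_ite, Nat.mod_eq_of_lt hp, Nat.mod_eq_of_lt (by omega : k < M)]
  split_ifs <;> omega

theorem stmt_3_general (M : ℕ)
    (τ : Fin M → Fin M)
    (hτ : ∀ p : Fin M, (τ p).val = (p.val + M / 2) % M) :
    Function.Bijective τ ∧
    ∀ a b : ℕ, a ≤ b → b < M → 2 * (b - a + 1) ≤ M →
      ∀ p : Fin M, a ≤ p.val → p.val ≤ b →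
        ¬(a ≤ (τ p).val ∧ (τ p).val ≤ b) := by
  refine ⟨Finite.injective_iff_bijective.mp fun p q hpq => ?_, ?_⟩
  · have hmod : p.val + M / 2 ≡ q.val + M / 2 [MOD M] := by
      rw [Nat.ModEq, ← hτ, ← hτ, hpq]
    exact Fin.ext ((Nat.ModEq.add_right_cancel' _ hmod).eq_of_lt_of_lt p.isLt q.isLt)
  · intro a b _ _ hsize p hap hpb
    rw [hτ]
    exact Nat.add_mod_notMem_Icc_of_sub_lt p.isLt (by omega) (by omega) hap hpb

/-- The cyclic shift τ by ⌊M/2⌋ modulo M is a bijection, and it maps no client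
of a consecutive block of size ≤ M/2 to another client of the same block. -/
theorem stmt_3 (M : ℕ) (hM : 1 ≤ M)
    (τ : Fin M → Fin M)
    (hτ : ∀ p : Fin M, (τ p).val = (p.val + M / 2) % M) :
    Function.Bijective τ ∧
    ∀ a b : ℕ, a ≤ b → b < M → 2 * (b - a + 1) ≤ M →
      ∀ p : Fin M, a ≤ p.val → p.val ≤ b →
        ¬(a ≤ (τ p).val ∧ (τ p).val ≤ b) :=
  stmt_3_general M τ hτ
end

section
/- The set D_sp = ∪_{o∈O_sp} (dom(π(o)) \ {o}) is disjoint from O_sp. -/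
/-! A point of `Dsp ∩ Osp` would be dominated both by its own pair and by the pair of another
point of `Osp`; these pairs are disjoint, and two disjoint sets cannot each carry more than half
of the total ball mass. -/

open Finset

theorem Finset.not_lt_two_mul_sum_of_disjoint {ι R : Type*} [Fintype ι] [Semiring R]
    [LinearOrder R] [IsStrictOrderedRing R] {w : ι → R} (hw : ∀ i, 0 ≤ w i) {S T : Finset ι}
    (hST : Disjoint S T) (hS : ∑ i, w i < 2 * ∑ i ∈ S, w i) :
    ¬ ∑ i, w i < 2 * ∑ i ∈ T, w i := by
  intro hT
  have hST_le : ∑ i ∈ S, w i + ∑ i ∈ T, w i ≤ ∑ i, w i := by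
    rw [← sum_disjUnion hST]
    exact sum_le_univ_sum_of_nonneg hw
  refine lt_irrefl (∑ i, w i + ∑ i, w i) ?_
  calc ∑ i, w i + ∑ i, w i < 2 * ∑ i ∈ S, w i + 2 * ∑ i ∈ T, w i := add_lt_add hS hT
    _ = 2 * (∑ i ∈ S, w i + ∑ i ∈ T, w i) := (mul_add _ _ _).symm
    _ ≤ 2 * ∑ i, w i := by gcongr
    _ = ∑ i, w i + ∑ i, w i := two_mul _

theorem stmt_8_general {FS FO C : Type*} [Fintype FS]
    (ball : FS → FO → Finset C)
    (M : FO → ℕ) (hM : ∀ o'' : FO, M o'' = ∑ s : FS, (ball s o'').card)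
    (dominates : Finset FS → FO → Prop)
    (hdomdef : ∀ (T : Finset FS) (o'' : FO),
      dominates T o'' ↔ M o'' < 2 * ∑ s ∈ T, (ball s o'').card)
    (Osp : Set FO) (π : FO → Finset FS)
    (hπdisj : ∀ o ∈ Osp, ∀ o' ∈ Osp, o ≠ o' → Disjoint (π o) (π o'))
    (hπdom : ∀ o ∈ Osp, dominates (π o) o)
    (Dsp : Set FO)
    (hDsp : Dsp = ⋃ o ∈ Osp, ({o'' : FO | dominates (π o) o''} \ {o})) :
    Disjoint Dsp Osp := by
  subst hDsp
  simp only [Set.disjoint_left, Set.mem_iUnion, Set.mem_sdiff, Set.mem_ofPred_eq,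
    Set.mem_singleton_iff]
  rintro o' ⟨o, ho, hdom, hne⟩ ho'
  have hdom' := hπdom o' ho'
  rw [hdomdef, hM] at hdom hdom'
  exact not_lt_two_mul_sum_of_disjoint (fun _ => Nat.zero_le _)
    (hπdisj o ho o' ho' (Ne.symm hne)) hdom hdom'

/-- D_sp = ∪_{o∈O_sp} (dom(π(o)) \ {o}) is disjoint from O_sp. -/
theorem stmt_8 {FS FO C : Type*} [Fintype FS] [DecidableEq FS] [DecidableEq C]
    (ball : FS → FO → Finset C)
    (hdisj : ∀ (o'' : FO) (s s' : FS), s ≠ s' → Disjoint (ball s o'') (ball s' o''))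
    (M : FO → ℕ) (hM : ∀ o'' : FO, M o'' = ∑ s : FS, (ball s o'').card)
    (dominates : Finset FS → FO → Prop)
    (hdomdef : ∀ (T : Finset FS) (o'' : FO),
      dominates T o'' ↔ M o'' < 2 * ∑ s ∈ T, (ball s o'').card)
    (Osp : Set FO) (π : FO → Finset FS)
    (hπdisj : ∀ o ∈ Osp, ∀ o' ∈ Osp, o ≠ o' → Disjoint (π o) (π o'))
    (hπdom : ∀ o ∈ Osp, dominates (π o) o)
    (Dsp : Set FO)
    (hDsp : Dsp = ⋃ o ∈ Osp, ({o'' : FO | dominates (π o) o''} \ {o})) :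
    Disjoint Dsp Osp :=
  stmt_8_general ball M hM dominates hdomdef Osp π hπdisj hπdom Dsp hDsp
end

section
/- Suppose for each facility o ∈ O there are weights w_o ∈ {1,2,3} and the inequality Σ_{o∈O} w_o Σ_{j∈B_O(o)} (O_j − S_j) + 3 Σ_{j∈C_L} (O_j + O_{τ(j)} + S_{τ(j)} − S_j) > 0 holds, where τ is a bijection of C_L, each per-client term O_j + O_{τ(j)} + S_{τ(j)} − S_j is nonnegative, the B_O(o) partition C, and C_L ⊆ C. Then Σ_{j∈C} S_j < 3 Σ_{j∈C} O_j + 6 Σ_{j∈C_L} O_j ≤ 9 Σ_{j∈C} O_j. -/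
/-! Bound each facility's weighted term clientwise by `3 O_j - S_j` (this uses `1 ≤ w_o ≤ 3` and
nonnegativity of the costs), so the first sum is at most `3 Σ O - Σ S` because the `B_O(o)`
partition `C`. Since `τ` permutes `C_L`, the `τ`-shifted sums in the second term equal the
unshifted ones, which collapses it to `6 Σ_{C_L} O`. -/

open Finset

theorem Finset.sum_sum_eq_sum_of_existsUnique_mem {ι κ M : Type*} [Fintype ι] [Fintype κ]
    [AddCommMonoid M] (B : ι → Finset κ) (hB : ∀ j, ∃! o, j ∈ B o) (f : κ → M) :
    ∑ o, ∑ j ∈ B o, f j = ∑ j, f j := by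
  classical
  choose σ hσ hσ_unique using hB
  have hfiber : ∀ o, B o = univ.filter (fun j => σ j = o) := fun o => by
    ext j
    simp only [mem_filter, mem_univ, true_and]
    exact ⟨fun h => (hσ_unique j o h).symm, fun h => h ▸ hσ j⟩
  simp_rw [hfiber]
  exact Finset.sum_fiberwise univ σ f

theorem Finset.sum_comp_eq_sum_of_bijOn {ι M : Type*} [AddCommMonoid M] {s : Finset ι}
    {τ : ι → ι} (hτ : Set.BijOn τ s s) (f : ι → M) :
    ∑ j ∈ s, f (τ j) = ∑ j ∈ s, f j :=
  sum_nbij τ (fun _ hj => hτ.mapsTo hj) hτ.injOn hτ.surjOn fun _ _ => rfl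

theorem sum_add_comp_add_comp_sub_eq_two_mul_sum {ι : Type*} {s : Finset ι} {τ : ι → ι} (hτ : Set.BijOn τ s s)
    (O S : ι → ℝ) :
    ∑ j ∈ s, (O j + O (τ j) + S (τ j) - S j) = 2 * ∑ j ∈ s, O j := by
  simp only [sum_sub_distrib, sum_add_distrib, sum_comp_eq_sum_of_bijOn hτ]
  ring

theorem mul_sub_le_three_mul_sub {w o s : ℝ} (hw₁ : 1 ≤ w) (hw₃ : w ≤ 3) (ho : 0 ≤ o)
    (hs : 0 ≤ s) : w * (o - s) ≤ 3 * o - s := by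
  nlinarith

theorem sum_weight_mul_sum_sub_le {FO C : Type*} [Fintype FO] [Fintype C] (O S : C → ℝ)
    (hO : ∀ j, 0 ≤ O j) (hS : ∀ j, 0 ≤ S j) (B : FO → Finset C) (hB : ∀ j, ∃! o, j ∈ B o)
    (w : FO → ℝ) (hw : ∀ o, 1 ≤ w o ∧ w o ≤ 3) :
    ∑ o, w o * ∑ j ∈ B o, (O j - S j) ≤ 3 * ∑ j, O j - ∑ j, S j :=
  calc ∑ o, w o * ∑ j ∈ B o, (O j - S j)
      ≤ ∑ o, ∑ j ∈ B o, (3 * O j - S j) := by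
        gcongr with o _
        rw [mul_sum]
        gcongr with j _
        exact mul_sub_le_three_mul_sub (hw o).1 (hw o).2 (hO j) (hS j)
    _ = ∑ j, (3 * O j - S j) := sum_sum_eq_sum_of_existsUnique_mem B hB _
    _ = 3 * ∑ j, O j - ∑ j, S j := by rw [sum_sub_distrib, mul_sum]

theorem stmt_13_general {FO C : Type*} [Fintype FO] [Fintype C]
    (Oc Sc : C → ℝ) (hOnn : ∀ j, 0 ≤ Oc j) (hSnn : ∀ j, 0 ≤ Sc j)
    (B : FO → Finset C)
    (hpart : ∀ j : C, ∃! o : FO, j ∈ B o)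
    (CL : Finset C)
    (τ : C → C) (hτ : Set.BijOn τ ↑CL ↑CL)
    (w : FO → ℕ) (hw : ∀ o, w o = 1 ∨ w o = 2 ∨ w o = 3)
    (hineq : 0 < ∑ o : FO, (w o : ℝ) * ∑ j ∈ B o, (Oc j - Sc j) +
        3 * ∑ j ∈ CL, (Oc j + Oc (τ j) + Sc (τ j) - Sc j)) :
    ∑ j : C, Sc j < 3 * ∑ j : C, Oc j + 6 * ∑ j ∈ CL, Oc j ∧
    3 * ∑ j : C, Oc j + 6 * ∑ j ∈ CL, Oc j ≤ 9 * ∑ j : C, Oc j := by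
  have hw_bounds : ∀ o, 1 ≤ (w o : ℝ) ∧ (w o : ℝ) ≤ 3 := fun o => by
    rcases hw o with h | h | h <;> norm_num [h]
  have hweighted := sum_weight_mul_sum_sub_le Oc Sc hOnn hSnn B hpart _ hw_bounds
  have hswap := sum_add_comp_add_comp_sub_eq_two_mul_sum hτ Oc Sc
  have hCL : ∑ j ∈ CL, Oc j ≤ ∑ j, Oc j :=
    sum_le_sum_of_subset_of_nonneg (subset_univ CL) fun j _ _ => hOnn j
  constructor <;> linarith

/-- From the weighted swap inequality (weights w_o ∈ {1,2,3}) one obtains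
Σ S_j < 3 Σ O_j + 6 Σ_{C_L} O_j ≤ 9 Σ O_j. -/
theorem stmt_13 {FO C : Type*} [Fintype FO] [Fintype C] [DecidableEq C]
    (Oc Sc : C → ℝ) (hOnn : ∀ j, 0 ≤ Oc j) (hSnn : ∀ j, 0 ≤ Sc j)
    (B : FO → Finset C)
    (hpart : ∀ j : C, ∃! o : FO, j ∈ B o)
    (CL : Finset C)
    (τ : C → C) (hτ : Set.BijOn τ ↑CL ↑CL)
    (w : FO → ℕ) (hw : ∀ o, w o = 1 ∨ w o = 2 ∨ w o = 3)
    (hterm : ∀ j ∈ CL, 0 ≤ Oc j + Oc (τ j) + Sc (τ j) - Sc j)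
    (hineq : 0 < ∑ o : FO, (w o : ℝ) * ∑ j ∈ B o, (Oc j - Sc j) +
        3 * ∑ j ∈ CL, (Oc j + Oc (τ j) + Sc (τ j) - Sc j)) :
    ∑ j : C, Sc j < 3 * ∑ j : C, Oc j + 6 * ∑ j ∈ CL, Oc j ∧
    3 * ∑ j : C, Oc j + 6 * ∑ j ∈ CL, Oc j ≤ 9 * ∑ j : C, Oc j :=
  stmt_13_general Oc Sc hOnn hSnn B hpart CL τ hτ w hw hineq
end

section
/- In the penalty setting, if for every client j that pays penalty in O but not in S we have p_j ≥ S_j (since otherwise j would pay penalty in S by local optimality of the min-cost assignment), then Σ_{j ∈ P(O)\P(S)} 3(p_j − S_j) ≥ 0, and summing the local-optimality inequalities yields cost(S) ≤ 9·cost(O), where cost includes service costs plus penalties. -/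
/-!
Write `c_S j` for what client `j` costs in `S` (its penalty if `j ∈ P(S)`, its service cost
otherwise). Since every weight lies in `[1, 3]` and all costs are nonnegative, the facility part
of the summed swap inequalities is at most `∑_{j ∉ P(O)} (3 O_j - c_S j)`; as `τ` permutes the
clients of light facilities, their part telescopes to `2 ∑ O_j`; and the clients of light
facilities paying penalty in `O` contribute at most `∑_{j ∈ P(O) \ P(S)} (p_j - S_j)`, which is
nonnegative by `p_j ≥ S_j`. Hence `∑_{j ∉ P(O)} c_S j ≤ 9 ∑_{j ∉ P(O)} O_j + 3 ∑_{P(O) \ P(S)}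
(p_j - S_j)`, and the clients of `P(O)` cost at most `3 p_j` in `S` even after adding that
correction term.
-/

open Finset

namespace Finset

variable {α ι M : Type*}

lemma sum_comp_eq_of_bijOn [AddCommMonoid M] {s : Finset α} {τ : α → α}
    (hτ : Set.BijOn τ s s) (f : α → M) : ∑ x ∈ s, f (τ x) = ∑ x ∈ s, f x :=
  sum_nbij τ (fun _ ha => hτ.mapsTo ha) hτ.injOn hτ.surjOn fun _ _ => rfl

lemma sum_sum_eq_of_existsUnique_mem [Fintype ι] [DecidableEq α] [AddCommMonoid M]
    {B : ι → Finset α} {s : Finset α} (hBs : ∀ i, B i ⊆ s) (hs : ∀ a ∈ s, ∃! i, a ∈ B i)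
    (f : α → M) : ∑ i, ∑ a ∈ B i, f a = ∑ a ∈ s, f a := by
  have hdisj : ((univ : Finset ι) : Set ι).PairwiseDisjoint B := fun i _ i' _ hne =>
    disjoint_left.2 fun a ha ha' => hne <| (hs a (hBs i ha)).unique ha ha'
  have hcover : univ.biUnion B = s := by
    ext a
    simp only [mem_biUnion, mem_univ, true_and]
    exact ⟨fun ⟨i, ha⟩ => hBs i ha, fun ha => (hs a ha).exists⟩
  rw [← sum_biUnion hdisj, hcover]

lemma sum_sub_piecewise [DecidableEq α] [AddCommGroup M] (s t : Finset α) (a f g : α → M) :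
    ∑ x ∈ s, (a x - t.piecewise f g x) = ∑ x ∈ s \ t, (a x - g x) + ∑ x ∈ s ∩ t, (a x - f x) := by
  rw [add_comm, ← sum_piecewise]
  exact sum_congr rfl fun x _ => by by_cases hx : x ∈ t <;> simp [hx]

lemma sum_add_comp_add_comp_sub_eq [CommRing M] {s : Finset α} {τ : α → α}
    (hτ : Set.BijOn τ s s) (a b : α → M) :
    ∑ x ∈ s, (a x + a (τ x) + b (τ x) - b x) = 2 * ∑ x ∈ s, a x := by
  simp only [sum_sub_distrib, sum_add_distrib, sum_comp_eq_of_bijOn hτ]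
  ring

end Finset

section

variable {R : Type*} [CommRing R] [LinearOrder R] [IsStrictOrderedRing R]

lemma mul_sub_le_of_one_le_of_le {w k a b : R} (hw1 : 1 ≤ w) (hwk : w ≤ k) (ha : 0 ≤ a)
    (hb : 0 ≤ b) : w * (a - b) ≤ k * a - b := by
  nlinarith

lemma sum_mul_sum_sub_le {ι α : Type*} [Fintype ι] [DecidableEq α] {B : ι → Finset α}
    {s : Finset α} (hBs : ∀ i, B i ⊆ s) (hs : ∀ x ∈ s, ∃! i, x ∈ B i) {w : ι → R} {k : R}
    (hw1 : ∀ i, 1 ≤ w i) (hwk : ∀ i, w i ≤ k) {a b : α → R} (ha : ∀ x, 0 ≤ a x)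
    (hb : ∀ x, 0 ≤ b x) : ∑ i, w i * ∑ x ∈ B i, (a x - b x) ≤ ∑ x ∈ s, (k * a x - b x) := by
  rw [← sum_sum_eq_of_existsUnique_mem hBs hs]
  refine sum_le_sum fun i _ => ?_
  rw [mul_sum]
  exact sum_le_sum fun x _ => mul_sub_le_of_one_le_of_le (hw1 i) (hwk i) (ha x) (hb x)

end

theorem stmt_17_general {FO C : Type*} [Fintype FO] [Fintype C] [DecidableEq C]
    (Oc Sc pen : C → ℝ)
    (hOnn : ∀ j, 0 ≤ Oc j) (hSnn : ∀ j, 0 ≤ Sc j) (hpnn : ∀ j, 0 ≤ pen j)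
    (PS PO : Finset C)           -- penalty sets of S and O
    (B : FO → Finset C)          -- clients served by o in O
    (hpart : ∀ j ∉ PO, ∃! o : FO, j ∈ B o)
    (hBPO : ∀ o : FO, Disjoint (B o) PO)
    (CL : Finset C)              -- clients served by light facilities of S
    (hCLPS : Disjoint CL PS)
    (τ : C → C) (hτ : Set.BijOn τ ↑(CL \ PO) ↑(CL \ PO))
    (w : FO → ℕ) (hw : ∀ o, w o = 1 ∨ w o = 2 ∨ w o = 3)
    -- clients paying penalty in O but not in S satisfy p_j ≥ S_j
    (hpen : ∀ j ∈ PO \ PS, Sc j ≤ pen j)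
    -- the summed local-optimality inequalities
    (hineq : 0 < ∑ o : FO, (w o : ℝ) *
        (∑ j ∈ B o \ PS, (Oc j - Sc j) + ∑ j ∈ B o ∩ PS, (Oc j - pen j)) +
      3 * ∑ j ∈ CL ∩ PO, (pen j - Sc j) +
      3 * ∑ j ∈ CL \ PO, (Oc j + Oc (τ j) + Sc (τ j) - Sc j))
    (costS costO : ℝ)
    (hcostS : costS = ∑ j ∈ Finset.univ \ PS, Sc j + ∑ j ∈ PS, pen j)
    (hcostO : costO = ∑ j ∈ Finset.univ \ PO, Oc j + ∑ j ∈ PO, pen j) :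
    0 ≤ ∑ j ∈ PO \ PS, 3 * (pen j - Sc j) ∧ costS ≤ 9 * costO := by
  set cS := PS.piecewise pen Sc
  have hfacility : ∑ o : FO, (w o : ℝ) *
      (∑ j ∈ B o \ PS, (Oc j - Sc j) + ∑ j ∈ B o ∩ PS, (Oc j - pen j))
      ≤ ∑ j ∈ univ \ PO, (3 * Oc j - cS j) := by
    simp only [← sum_sub_piecewise]
    refine sum_mul_sum_sub_le (fun o => subset_sdiff.2 ⟨subset_univ _, hBPO o⟩)
      (fun j hj => hpart j (mem_sdiff.1 hj).2) (fun o => ?_) (fun o => ?_) hOnn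
      (fun j => ?_)
    · rcases hw o with h | h | h <;> simp [h]
    · rcases hw o with h | h | h <;> norm_num [h]
    · by_cases hj : j ∈ PS <;> simp [hj, hpnn, hSnn]
  have hlight : ∑ j ∈ CL \ PO, (Oc j + Oc (τ j) + Sc (τ j) - Sc j)
      ≤ 2 * ∑ j ∈ univ \ PO, Oc j := by
    rw [sum_add_comp_add_comp_sub_eq hτ]
    gcongr
    · exact fun j _ _ => hOnn j
    · exact subset_univ CL
  have hpenalty : ∑ j ∈ CL ∩ PO, (pen j - Sc j) ≤ ∑ j ∈ PO \ PS, (pen j - Sc j) :=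
    sum_le_sum_of_subset_of_nonneg
      (fun j hj => mem_sdiff.2 ⟨(mem_inter.1 hj).2, disjoint_left.1 hCLPS (mem_inter.1 hj).1⟩)
      (fun j hj _ => sub_nonneg.2 (hpen j hj))
  have hcostS' : costS = ∑ j ∈ univ \ PO, cS j + ∑ j ∈ PO ∩ PS, pen j + ∑ j ∈ PO \ PS, Sc j := by
    rw [add_assoc, ← sum_piecewise, sum_sdiff (subset_univ PO), sum_piecewise, univ_inter,
      hcostS, add_comm]
  have hcostO' : costO = ∑ j ∈ univ \ PO, Oc j + ∑ j ∈ PO ∩ PS, pen j + ∑ j ∈ PO \ PS, pen j := by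
    rw [add_assoc, sum_inter_add_sum_sdiff, hcostO]
  refine ⟨sum_nonneg fun j hj => by linarith [hpen j hj], ?_⟩
  rw [sum_sub_distrib, ← mul_sum] at hfacility
  linarith [sum_sub_distrib (s := PO \ PS) pen Sc, sum_nonneg fun j (_ : j ∈ PO ∩ PS) => hpnn j,
    sum_nonneg fun j (_ : j ∈ PO \ PS) => hpnn j, sum_nonneg fun j (_ : j ∈ PO \ PS) => hSnn j]

/-- CkMP: if every client paying penalty in O but served in S has p_j ≥ S_j,
then Σ_{j∈P(O)\P(S)} 3(p_j − S_j) ≥ 0, and the summed local-optimality swap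
inequality yields cost(S) ≤ 9·cost(O), costs including service plus penalties. -/
theorem stmt_17 {FO C : Type*} [Fintype FO] [Fintype C] [DecidableEq C]
    (Oc Sc pen : C → ℝ)
    (hOnn : ∀ j, 0 ≤ Oc j) (hSnn : ∀ j, 0 ≤ Sc j) (hpnn : ∀ j, 0 ≤ pen j)
    (PS PO : Finset C)           -- penalty sets of S and O
    (B : FO → Finset C)          -- clients served by o in O
    (hpart : ∀ j ∉ PO, ∃! o : FO, j ∈ B o)
    (hBPO : ∀ o : FO, Disjoint (B o) PO)
    (CL : Finset C)              -- clients served by light facilities of S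
    (hCLPS : Disjoint CL PS)
    (τ : C → C) (hτ : Set.BijOn τ ↑(CL \ PO) ↑(CL \ PO))
    (w : FO → ℕ) (hw : ∀ o, w o = 1 ∨ w o = 2 ∨ w o = 3)
    (hterm : ∀ j ∈ CL \ PO, 0 ≤ Oc j + Oc (τ j) + Sc (τ j) - Sc j)
    -- clients paying penalty in O but not in S satisfy p_j ≥ S_j
    (hpen : ∀ j ∈ PO \ PS, Sc j ≤ pen j)
    -- the summed local-optimality inequalities
    (hineq : 0 < ∑ o : FO, (w o : ℝ) *
        (∑ j ∈ B o \ PS, (Oc j - Sc j) + ∑ j ∈ B o ∩ PS, (Oc j - pen j)) +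
      3 * ∑ j ∈ CL ∩ PO, (pen j - Sc j) +
      3 * ∑ j ∈ CL \ PO, (Oc j + Oc (τ j) + Sc (τ j) - Sc j))
    (costS costO : ℝ)
    (hcostS : costS = ∑ j ∈ Finset.univ \ PS, Sc j + ∑ j ∈ PS, pen j)
    (hcostO : costO = ∑ j ∈ Finset.univ \ PO, Oc j + ∑ j ∈ PO, pen j) :
    0 ≤ ∑ j ∈ PO \ PS, 3 * (pen j - Sc j) ∧ costS ≤ 9 * costO :=
  stmt_17_general Oc Sc pen hOnn hSnn hpnn PS PO B hpart hBPO CL hCLPS τ hτ w hw hpen hineq costS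
    costO hcostS hcostO
end
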